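/- arXiv:2410.17668 — 11 statements merged into one kernel-verified Lean document; each statement's English description precedes it below -/
import Mathlib

section
/- Let f : 𝔽_{q^n} → 𝔽_{q^n} be a bijection with coordinate functions f_i(x) = Tr(v_i f(x)) with respect to a dual pair of ordered bases u_1,…,u_n and v_1,…,v_n of 𝔽_{q^n} over 𝔽_q, let h_1,…,h_n : 𝔽_q → 𝔽_q be maps, and let a_1,…,a_n ∈ 𝔽_{q^n}. Then the map F : 𝔽_{q^n} → 𝔽_{q^n} defined by F(x) = a_1 h_1(f_1(x)) + ⋯ + a_n h_n(f_n(x)) is a bijection of 𝔽_{q^n} if and only if (1) a_1,…,a_n form a basis of 𝔽_{q^n} over 𝔽_q and (2) each h_i is a bijection of 𝔽_q. -/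
/-!
With respect to the basis `u`, duality says `Tr(vᵢ y)` is the `i`-th coordinate of `y`, so
`F = A ∘ H ∘ (c ∘ f)` where `c : L ≃ Kⁿ` is the coordinate map, `H = (hᵢ)ᵢ` acts coordinatewise
on `Kⁿ` and `A k = ∑ kᵢ aᵢ`. As `c ∘ f` is bijective, `F` is bijective iff `A ∘ H` is; on the
finite set `Kⁿ` this forces `H` to be bijective, and then `A` too.
-/

open Function

theorem Function.bijective_comp_iff_of_finite {α β : Type*} [Finite α] {A : α → β}
    {H : α → α} : Bijective (A ∘ H) ↔ Bijective A ∧ Bijective H := by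
  refine ⟨fun hAH => ?_, fun ⟨hA, hH⟩ => hA.comp hH⟩
  have hH : Bijective H := Finite.injective_iff_bijective.1 hAH.1.of_comp
  exact ⟨(Bijective.of_comp_iff A hH).1 hAH, hH⟩

theorem Module.Basis.trace_mul_eq_repr {ι K L : Type*} [DecidableEq ι] [CommRing K]
    [CommRing L] [Algebra K L] (b : Module.Basis ι K L) (v : ι → L)
    (hdual : ∀ i j, Algebra.trace K L (b i * v j) = if i = j then 1 else 0) (y : L) (i : ι) :
    Algebra.trace K L (v i * y) = b.repr y i := by
  have hcoord : (Algebra.trace K L).comp (LinearMap.mulLeft K (v i)) = b.coord i :=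
    b.ext fun j => by
      simp [mul_comm (v i), hdual, Finsupp.single_apply, eq_comm]
  exact LinearMap.congr_fun hcoord y

theorem stmt0_general {K L : Type*} [Field K] [Field L] [Algebra K L]
    [Fintype K] [Fintype L] {n : ℕ}
    (u v : Fin n → L)
    (hbasisu : LinearIndependent K u ∧ Submodule.span K (Set.range u) = ⊤)
    (hdual : ∀ i j, Algebra.trace K L (u i * v j) = if i = j then 1 else 0)
    (f : L → L) (hf : Function.Bijective f)
    (h : Fin n → K → K) (a : Fin n → L) :
    Function.Bijective (fun x : L =>
        ∑ i, a i * algebraMap K L (h i (Algebra.trace K L (v i * f x)))) ↔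
      (LinearIndependent K a ∧ Submodule.span K (Set.range a) = ⊤) ∧
        (∀ i, Function.Bijective (h i)) := by
  let b := Module.Basis.mk hbasisu.1 hbasisu.2.ge
  have hcoord (y : L) (i : Fin n) : Algebra.trace K L (v i * y) = b.equivFun y i :=
    b.trace_mul_eq_repr v (by simpa [b] using hdual) y i
  have hF : (fun x : L => ∑ i, a i * algebraMap K L (h i (Algebra.trace K L (v i * f x)))) =
      Fintype.linearCombination K a ∘ Pi.map h ∘ (b.equivFun ∘ f) := by
    funext x
    simp [hcoord, Fintype.linearCombination_apply, Algebra.smul_def, mul_comm]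
  rw [hF, ← comp_assoc, Bijective.of_comp_iff _ (b.equivFun.bijective.comp hf),
    bijective_comp_iff_of_finite, linearIndependent_iff_injective_fintypeLinearCombination,
    span_range_eq_top_iff_surjective_fintypeLinearCombination]
  simp only [← Finite.injective_iff_bijective, Pi.map_injective]
  rfl

/-- With `K = 𝔽_q`, `L = 𝔽_{q^n}`, a dual pair of ordered bases `u, v`,
a bijection `f : L → L` with coordinate functions `fᵢ(x) = Tr(vᵢ f(x))`, maps
`hᵢ : K → K` and elements `aᵢ ∈ L`, the map
`F(x) = ∑ aᵢ hᵢ(fᵢ(x))` is a bijection of `L` iff `a₁, …, aₙ` is a basis of `L`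
over `K` and each `hᵢ` is a bijection of `K`. -/
theorem stmt0 {K L : Type*} [Field K] [Field L] [Algebra K L]
    [Fintype K] [Fintype L] {n : ℕ} (hn : 0 < n)
    (hdim : Module.finrank K L = n)
    (u v : Fin n → L)
    (hbasisu : LinearIndependent K u ∧ Submodule.span K (Set.range u) = ⊤)
    (hbasisv : LinearIndependent K v ∧ Submodule.span K (Set.range v) = ⊤)
    (hdual : ∀ i j, Algebra.trace K L (u i * v j) = if i = j then 1 else 0)
    (f : L → L) (hf : Function.Bijective f)
    (h : Fin n → K → K) (a : Fin n → L) :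
    Function.Bijective (fun x : L =>
        ∑ i, a i * algebraMap K L (h i (Algebra.trace K L (v i * f x)))) ↔
      (LinearIndependent K a ∧ Submodule.span K (Set.range a) = ⊤) ∧
        (∀ i, Function.Bijective (h i)) :=
  stmt0_general u v hbasisu hdual f hf h a
end

section
/- Let f : 𝔽_{q^n} → 𝔽_{q^n} be a bijection with coordinate functions f_i(x) = Tr(v_i f(x)) with respect to a dual pair of ordered bases u_1,…,u_n and v_1,…,v_n of 𝔽_{q^n} over 𝔽_q, let h_1,…,h_n : 𝔽_q → 𝔽_q be bijections, let a_1,…,a_n be a basis of 𝔽_{q^n} over 𝔽_q with dual basis b_1,…,b_n (i.e. Tr(a_i b_j) = 1 when i = j and 0 otherwise), and define F(x) = a_1 h_1(f_1(x)) + ⋯ + a_n h_n(f_n(x)). Then the inverse of the bijection F is given by F^{-1}(x) = f^{-1}(∑_{i=1}^n u_i h_i^{-1}(Tr(b_i x))), i.e. the map G(x) = f^{-1}(∑_{i=1}^n u_i h_i^{-1}(Tr(b_i x))) satisfies G(F(x)) = x and F(G(x)) = x for all x ∈ 𝔽_{q^n}. -/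
/-!
If `Tr (a i * b j) = δᵢⱼ`, then `c ↦ ∑ aᵢ cᵢ` and `y ↦ (Tr (bᵢ y))ᵢ` are mutually inverse
coordinate maps once `a` is a basis. Hence `F` is the composite
`f`, then coordinates w.r.t. `(u, v)`, then the `hᵢ` coordinatewise, then synthesis along `a`;
`G` undoes these steps in reverse order.
-/

section TraceDual

variable {K L : Type*} [Field K] [Field L] [Algebra K L] {n : ℕ}

lemma trace_mul_sum_eq_of_trace_dual {a b : Fin n → L}
    (hab : ∀ i j, Algebra.trace K L (a i * b j) = if i = j then 1 else 0)
    (c : Fin n → K) (j : Fin n) :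
    Algebra.trace K L (b j * ∑ i, a i * algebraMap K L (c i)) = c j := by
  have hterm : ∀ i, Algebra.trace K L (b j * (a i * algebraMap K L (c i)))
      = if i = j then c i else 0 := by
    intro i
    rw [show b j * (a i * algebraMap K L (c i)) = c i • (a i * b j) by
        rw [Algebra.smul_def]; ring,
      map_smul, hab i j, smul_eq_mul, mul_ite, mul_one, mul_zero]
  simp only [Finset.mul_sum, map_sum, hterm, Finset.sum_ite_eq', Finset.mem_univ, if_true]

lemma sum_mul_trace_eq_of_trace_dual {a b : Fin n → L}
    (hli : LinearIndependent K a) (hsp : Submodule.span K (Set.range a) = ⊤)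
    (hab : ∀ i j, Algebra.trace K L (a i * b j) = if i = j then 1 else 0) (y : L) :
    ∑ i, a i * algebraMap K L (Algebra.trace K L (b i * y)) = y := by
  let B : Module.Basis (Fin n) K L := Module.Basis.mk hli hsp.ge
  obtain ⟨c, rfl⟩ : ∃ c : Fin n → K, ∑ i, a i * algebraMap K L (c i) = y := by
    refine ⟨B.repr y, ?_⟩
    conv_rhs => rw [← B.sum_repr y]
    simp only [B, Module.Basis.mk_apply, Algebra.smul_def, mul_comm]
  simp only [trace_mul_sum_eq_of_trace_dual hab]

end TraceDual

theorem stmt1_general {K L : Type*} [Field K] [Field L] [Algebra K L]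
    {n : ℕ}
    (u v : Fin n → L)
    (hbasisu : LinearIndependent K u ∧ Submodule.span K (Set.range u) = ⊤)
    (hdual : ∀ i j, Algebra.trace K L (u i * v j) = if i = j then 1 else 0)
    (f finv : L → L)
    (hf : Function.LeftInverse finv f) (hf' : Function.RightInverse finv f)
    (h hinv : Fin n → K → K)
    (hh : ∀ i, Function.LeftInverse (hinv i) (h i))
    (hh' : ∀ i, Function.RightInverse (hinv i) (h i))
    (a b : Fin n → L)
    (hbasisa : LinearIndependent K a ∧ Submodule.span K (Set.range a) = ⊤)
    (hab : ∀ i j, Algebra.trace K L (a i * b j) = if i = j then 1 else 0)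
    (F G : L → L)
    (hF : ∀ x, F x = ∑ i, a i * algebraMap K L (h i (Algebra.trace K L (v i * f x))))
    (hG : ∀ x, G x = finv (∑ i, u i * algebraMap K L (hinv i (Algebra.trace K L (b i * x))))) :
    (∀ x, G (F x) = x) ∧ (∀ x, F (G x) = x) := by
  constructor
  · intro x
    rw [hG, hF]
    simp only [trace_mul_sum_eq_of_trace_dual hab, hh _ _,
      sum_mul_trace_eq_of_trace_dual hbasisu.1 hbasisu.2 hdual, hf x]
  · intro x
    rw [hF, hG, hf']
    simp only [trace_mul_sum_eq_of_trace_dual hdual, hh' _ _,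
      sum_mul_trace_eq_of_trace_dual hbasisa.1 hbasisa.2 hab]

/-- With the notation of Statement 0, if moreover each `hᵢ` is a bijection
with inverse `hinvᵢ`, `f` is a bijection with inverse `finv`, and `a₁,…,aₙ` is a basis
with dual basis `b₁,…,bₙ`, then the inverse of the bijection
`F(x) = ∑ aᵢ hᵢ(Tr(vᵢ f(x)))` is `G(x) = finv (∑ uᵢ hinvᵢ(Tr(bᵢ x)))`. -/
theorem stmt1 {K L : Type*} [Field K] [Field L] [Algebra K L]
    [Fintype K] [Fintype L] {n : ℕ} (hn : 0 < n)
    (hdim : Module.finrank K L = n)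
    (u v : Fin n → L)
    (hbasisu : LinearIndependent K u ∧ Submodule.span K (Set.range u) = ⊤)
    (hbasisv : LinearIndependent K v ∧ Submodule.span K (Set.range v) = ⊤)
    (hdual : ∀ i j, Algebra.trace K L (u i * v j) = if i = j then 1 else 0)
    (f finv : L → L)
    (hf : Function.LeftInverse finv f) (hf' : Function.RightInverse finv f)
    (h hinv : Fin n → K → K)
    (hh : ∀ i, Function.LeftInverse (hinv i) (h i))
    (hh' : ∀ i, Function.RightInverse (hinv i) (h i))
    (a b : Fin n → L)
    (hbasisa : LinearIndependent K a ∧ Submodule.span K (Set.range a) = ⊤)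
    (hab : ∀ i j, Algebra.trace K L (a i * b j) = if i = j then 1 else 0)
    (F G : L → L)
    (hF : ∀ x, F x = ∑ i, a i * algebraMap K L (h i (Algebra.trace K L (v i * f x))))
    (hG : ∀ x, G x = finv (∑ i, u i * algebraMap K L (hinv i (Algebra.trace K L (b i * x))))) :
    (∀ x, G (F x) = x) ∧ (∀ x, F (G x) = x) :=
  stmt1_general u v hbasisu hdual f finv hf hf' h hinv hh hh' a b hbasisa hab F G hF hG
end

section
/- Let θ_1,…,θ_n ∈ 𝔽_{q^n}, let a_1,…,a_n ∈ 𝔽_{q^n}, and let m_1,…,m_n be positive integers. Then the map F : 𝔽_{q^n} → 𝔽_{q^n} defined by F(x) = a_1 Tr(θ_1 x)^{m_1} + ⋯ + a_n Tr(θ_n x)^{m_n} is a bijection of 𝔽_{q^n} if and only if the following three conditions hold: (i) gcd(m_1 ⋯ m_n, q−1) = 1, (ii) a_1,…,a_n is a basis of 𝔽_{q^n} over 𝔽_q, and (iii) θ_1,…,θ_n is a basis of 𝔽_{q^n} over 𝔽_q. -/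
/-!
Write `F = S_a ∘ P ∘ T_θ`, where `T_θ x = (Tr(θᵢ x))ᵢ`, `P` raises the `i`-th coordinate to the
power `mᵢ`, and `S_a c = ∑ cᵢ aᵢ`. The maps `T_θ` and `S_a` are `𝔽_q`-linear between spaces of
dimension `n`, so the composite is bijective iff each of the three factors is. `S_a` is bijective
iff `a` is a basis; `T_θ` is the transpose of `S_θ` for the nondegenerate trace form, hence
bijective iff `θ` is a basis; and `P` is bijective iff every `y ↦ y ^ mᵢ` is, i.e. iff `mᵢ` is
prime to `q - 1` (otherwise Cauchy's theorem gives a nontrivial `mᵢ`-th root of unity).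
-/

open Function Module

theorem pow_left_injective_iff_coprime {G : Type*} [Group G] [Finite G] {m : ℕ} :
    Injective (· ^ m : G → G) ↔ (Nat.card G).Coprime m := by
  refine ⟨fun h => ?_, fun h => h.pow_left_bijective.injective⟩
  by_contra hcop
  obtain ⟨p, hp, hpG, hpm⟩ := Nat.Prime.not_coprime_iff_dvd.mp hcop
  have := Fact.mk hp
  obtain ⟨g, hg⟩ := exists_prime_orderOf_dvd_card' p hpG
  have hg1 : g ≠ 1 := by
    rintro rfl
    exact hp.one_lt.ne' (hg ▸ orderOf_one)
  exact hg1 (h (by simp only [one_pow, orderOf_dvd_iff_pow_eq_one.mp (hg ▸ hpm)]))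

theorem GroupWithZero.pow_left_injective_iff_coprime {M₀ : Type*} [GroupWithZero M₀] [Finite M₀]
    {m : ℕ} (hm : m ≠ 0) : Injective (· ^ m : M₀ → M₀) ↔ m.Coprime (Nat.card M₀ - 1) := by
  rw [Nat.coprime_comm, ← Nat.card_units, ← _root_.pow_left_injective_iff_coprime]
  refine ⟨fun h u v huv => Units.ext (h (by simpa using congrArg Units.val huv)),
    fun h x y hxy => ?_⟩
  obtain rfl | hx := eq_or_ne x 0
  · exact ((pow_eq_zero_iff hm).mp (hxy.symm.trans (zero_pow hm))).symm
  obtain rfl | hy := eq_or_ne y 0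
  · exact (pow_eq_zero_iff hm).mp (hxy.trans (zero_pow hm))
  exact congrArg Units.val (h (a₁ := Units.mk0 x hx) (a₂ := Units.mk0 y hy) (Units.ext hxy))

theorem Fintype.bijective_linearCombination_iff {R M ι : Type*} [Semiring R] [AddCommMonoid M]
    [Module R M] [Fintype ι] (v : ι → M) :
    Bijective (Fintype.linearCombination R v) ↔
      LinearIndependent R v ∧ Submodule.span R (Set.range v) = ⊤ := by
  rw [linearIndependent_iff_injective_fintypeLinearCombination,
    span_range_eq_top_iff_surjective_fintypeLinearCombination]
  rfl

theorem LinearMap.bijective_comp_comp_iff {K U V W : Type*} [Field K] [AddCommGroup U]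
    [AddCommGroup V] [AddCommGroup W] [Module K U] [Module K V] [Module K W]
    [FiniteDimensional K U] [FiniteDimensional K V] [FiniteDimensional K W]
    (hUV : finrank K U = finrank K V) (hVW : finrank K V = finrank K W)
    (S : V →ₗ[K] W) (P : V → V) (T : U →ₗ[K] V) :
    Bijective (S ∘ P ∘ T) ↔ Bijective P ∧ Bijective S ∧ Bijective T := by
  refine ⟨fun h => ?_, fun ⟨hP, hS, hT⟩ => hS.comp (hP.comp hT)⟩
  have hTinj : Injective T := h.injective.of_comp (f := S ∘ P)
  have hT : Bijective T := ⟨hTinj, (injective_iff_surjective_of_finrank_eq_finrank hUV).mp hTinj⟩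
  have hSP : Bijective (S ∘ P) := (Bijective.of_comp_iff (S ∘ P) hT).mp h
  have hS : Bijective S :=
    ⟨(injective_iff_surjective_of_finrank_eq_finrank hVW).mpr hSP.surjective.of_comp,
      hSP.surjective.of_comp⟩
  exact ⟨(Bijective.of_comp_iff' hS P).mp hSP, hS, hT⟩

section Trace

variable (K : Type*) {L ι : Type*} [Field K] [Field L] [Algebra K L] [Fintype ι]

noncomputable def traceVector (θ : ι → L) : L →ₗ[K] ι → K :=
  LinearMap.pi fun i => Algebra.trace K L ∘ₗ LinearMap.mulLeft K (θ i)

variable {K}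

theorem trace_linearCombination_mul (θ : ι → L) (c : ι → K) (x : L) :
    Algebra.trace K L (Fintype.linearCombination K θ c * x) = ∑ i, c i * traceVector K θ x i := by
  simp [Fintype.linearCombination_apply, Finset.sum_mul, traceVector]

theorem bijective_traceVector_iff [FiniteDimensional K L] [Algebra.IsSeparable K L]
    (hdim : finrank K L = Fintype.card ι) (θ : ι → L) :
    Bijective (traceVector K θ) ↔ Bijective (Fintype.linearCombination K θ) := by
  classical
  have hrank : finrank K (ι → K) = finrank K L := by simp [hdim]
  constructor
  · intro hT
    have hinj : Injective (Fintype.linearCombination K θ) := by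
      refine (injective_iff_map_eq_zero _).mpr fun c hc => funext fun j => ?_
      obtain ⟨x, hx⟩ := hT.surjective (Pi.single j 1)
      simpa [hc, hx, Pi.single_apply, eq_comm] using trace_linearCombination_mul θ c x
    exact ⟨hinj, (LinearMap.injective_iff_surjective_of_finrank_eq_finrank hrank).mp hinj⟩
  · intro hS
    have hinj : Injective (traceVector K θ) := by
      refine (injective_iff_map_eq_zero _).mpr fun x hx => ?_
      refine (traceForm_nondegenerate K L).1 x fun y => ?_
      obtain ⟨c, rfl⟩ := hS.surjective y
      simpa [hx, mul_comm x] using trace_linearCombination_mul θ c x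
    exact ⟨hinj, (LinearMap.injective_iff_surjective_of_finrank_eq_finrank hrank.symm).mp hinj⟩

end Trace

theorem stmt2_general {K L : Type*} [Field K] [Field L] [Algebra K L]
    [Fintype K] [Fintype L] {n : ℕ}
    (hdim : Module.finrank K L = n)
    (θ a : Fin n → L) (m : Fin n → ℕ) (hm : ∀ i, 0 < m i) :
    Function.Bijective (fun x : L =>
        ∑ i, a i * algebraMap K L ((Algebra.trace K L (θ i * x)) ^ (m i))) ↔
      (Nat.gcd (∏ i, m i) (Fintype.card K - 1) = 1 ∧
        (LinearIndependent K a ∧ Submodule.span K (Set.range a) = ⊤) ∧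
        (LinearIndependent K θ ∧ Submodule.span K (Set.range θ) = ⊤)) := by
  have hF : (fun x : L => ∑ i, a i * algebraMap K L (Algebra.trace K L (θ i * x) ^ m i)) =
      Fintype.linearCombination K a ∘ Pi.map (fun i (y : K) => y ^ m i) ∘ traceVector K θ := by
    funext x
    simp [Fintype.linearCombination_apply, traceVector, Algebra.smul_def, mul_comm]
  have hP : Bijective (Pi.map fun i (y : K) => y ^ m i) ↔
      Nat.gcd (∏ i, m i) (Fintype.card K - 1) = 1 := by
    rw [← Finite.injective_iff_bijective, Pi.map_injective, ← Nat.Coprime,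
      Nat.coprime_prod_left_iff]
    simp [GroupWithZero.pow_left_injective_iff_coprime (hm _).ne', Nat.card_eq_fintype_card]
  have hrank : finrank K L = finrank K (Fin n → K) := by simp [hdim]
  rw [hF, LinearMap.bijective_comp_comp_iff hrank hrank.symm, hP,
    bijective_traceVector_iff (by simp [hdim]), Fintype.bijective_linearCombination_iff,
    Fintype.bijective_linearCombination_iff]

/-- With `K = 𝔽_q`, `L = 𝔽_{q^n}`, elements `θᵢ, aᵢ ∈ L` and positive
integers `mᵢ`, the map `F(x) = ∑ aᵢ Tr(θᵢ x)^{mᵢ}` is a bijection of `L` iff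
`gcd(m₁⋯mₙ, q−1) = 1`, `a₁,…,aₙ` is a basis of `L` over `K`, and `θ₁,…,θₙ` is a basis
of `L` over `K`. -/
theorem stmt2 {K L : Type*} [Field K] [Field L] [Algebra K L]
    [Fintype K] [Fintype L] {n : ℕ} (hn : 0 < n)
    (hdim : Module.finrank K L = n)
    (θ a : Fin n → L) (m : Fin n → ℕ) (hm : ∀ i, 0 < m i) :
    Function.Bijective (fun x : L =>
        ∑ i, a i * algebraMap K L ((Algebra.trace K L (θ i * x)) ^ (m i))) ↔
      (Nat.gcd (∏ i, m i) (Fintype.card K - 1) = 1 ∧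
        (LinearIndependent K a ∧ Submodule.span K (Set.range a) = ⊤) ∧
        (LinearIndependent K θ ∧ Submodule.span K (Set.range θ) = ⊤)) :=
  stmt2_general hdim θ a m hm
end

section
/- Let u_1,…,u_n and v_1,…,v_n be a dual pair of ordered bases of 𝔽_{q^n} over 𝔽_q and let f : 𝔽_{q^n} → 𝔽_{q^n} be a map with coordinate functions f_i(x) = Tr(v_i f(x)). Then f is a bijection of 𝔽_{q^n} if and only if there exists a multivariate polynomial F ∈ 𝔽_{q^n}[x_1, …, x_n] such that for all x ∈ 𝔽_{q^n}, F(f_1(x), …, f_n(x)) = x (where the values f_i(x) ∈ 𝔽_q are viewed as elements of 𝔽_{q^n}). -/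
/-! Writing `z = ∑ cᵢ uᵢ`, duality gives `Tr(vⱼ z) = cⱼ`, so `z` is determined by its trace
coordinates. Hence the coordinate map `x ↦ (f₁(x), …, fₙ(x))` is injective exactly when `f` is,
i.e. (as `𝔽_{q^n}` is finite) when `f` is bijective. Over a finite field every function
`𝔽_{q^n}ⁿ → 𝔽_{q^n}` is a polynomial function, in particular a left inverse of an injective
coordinate map; conversely `F` itself is a left inverse of it. -/

open MvPolynomial

theorem MvPolynomial.exists_eval_eq {K σ : Type*} [Field K] [Fintype K] [Finite σ]
    (h : (σ → K) → K) : ∃ F : MvPolynomial σ K, ∀ x, eval x F = h x := by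
  obtain ⟨F, -, hF⟩ := (map_restrict_dom_evalₗ K σ).ge (Submodule.mem_top (x := h))
  exact ⟨F, congrFun hF⟩

section DualPair

variable {R S ι : Type*} [CommRing R] [CommRing S] [Algebra R S] [Fintype ι] [DecidableEq ι]
  {u v : ι → S}

theorem trace_mul_eq_of_eq_sum
    (hdual : ∀ i j, Algebra.trace R S (u i * v j) = if i = j then 1 else 0)
    {c : ι → R} {z : S} (hz : ∑ i, c i • u i = z) (j : ι) :
    Algebra.trace R S (v j * z) = c j := by
  rw [← hz, mul_comm, Finset.sum_mul, map_sum]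
  simp only [smul_mul_assoc, map_smul, hdual, smul_eq_mul, mul_ite, mul_one, mul_zero,
    Finset.sum_ite_eq', Finset.mem_univ, if_true]

theorem sum_trace_mul_smul_eq (hu : Submodule.span R (Set.range u) = ⊤)
    (hdual : ∀ i j, Algebra.trace R S (u i * v j) = if i = j then 1 else 0) (z : S) :
    ∑ j, Algebra.trace R S (v j * z) • u j = z := by
  obtain ⟨c, hc⟩ :=
    (Submodule.mem_span_range_iff_exists_fun R).mp (hu.ge (Submodule.mem_top (x := z)))
  simp only [trace_mul_eq_of_eq_sum hdual hc]
  exact hc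

theorem injective_trace_mul_of_dual (hu : Submodule.span R (Set.range u) = ⊤)
    (hdual : ∀ i j, Algebra.trace R S (u i * v j) = if i = j then 1 else 0) :
    Function.Injective fun (z : S) j => Algebra.trace R S (v j * z) := by
  intro z w hzw
  rw [← sum_trace_mul_smul_eq hu hdual z, ← sum_trace_mul_smul_eq hu hdual w]
  exact congrArg (fun t : ι → R => ∑ j, t j • u j) hzw

end DualPair

theorem stmt8_general {K L : Type*} [Field K] [Field L] [Algebra K L]
    [Fintype L] {n : ℕ}
    (u v : Fin n → L)
    (hbasisu : LinearIndependent K u ∧ Submodule.span K (Set.range u) = ⊤)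
    (hdual : ∀ i j, Algebra.trace K L (u i * v j) = if i = j then 1 else 0)
    (f : L → L) :
    Function.Bijective f ↔
      ∃ F : MvPolynomial (Fin n) L,
        ∀ x : L,
          MvPolynomial.eval
            (fun i => algebraMap K L (Algebra.trace K L (v i * f x))) F = x := by
  set g : L → Fin n → L := fun x i => algebraMap K L (Algebra.trace K L (v i * f x))
  constructor
  · intro hf
    have hg : Function.Injective g := fun x y hxy =>
      hf.injective <| injective_trace_mul_of_dual hbasisu.2 hdual <|
        funext fun i => (algebraMap K L).injective (congrFun hxy i)
    obtain ⟨F, hF⟩ := MvPolynomial.exists_eval_eq (Function.invFun g)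
    exact ⟨F, fun x => (hF _).trans (Function.leftInverse_invFun hg x)⟩
  · rintro ⟨F, hF⟩
    refine Finite.injective_iff_bijective.mp fun x y hxy => ?_
    rw [← hF x, ← hF y]
    simp only [hxy]

/-- With a dual pair of ordered bases `u, v` of `L = 𝔽_{q^n}` over
`K = 𝔽_q`, a map `f : L → L` with coordinate functions `fᵢ(x) = Tr(vᵢ f(x))` is a
bijection of `L` iff there is a multivariate polynomial `F ∈ L[x₁,…,xₙ]` with
`F(f₁(x), …, fₙ(x)) = x` for all `x ∈ L` (the values `fᵢ(x) ∈ K` being viewed in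
`L` via the algebra map). -/
theorem stmt8 {K L : Type*} [Field K] [Field L] [Algebra K L]
    [Fintype K] [Fintype L] {n : ℕ} (hn : 0 < n)
    (hdim : Module.finrank K L = n)
    (u v : Fin n → L)
    (hbasisu : LinearIndependent K u ∧ Submodule.span K (Set.range u) = ⊤)
    (hbasisv : LinearIndependent K v ∧ Submodule.span K (Set.range v) = ⊤)
    (hdual : ∀ i j, Algebra.trace K L (u i * v j) = if i = j then 1 else 0)
    (f : L → L) :
    Function.Bijective f ↔
      ∃ F : MvPolynomial (Fin n) L,
        ∀ x : L,
          MvPolynomial.eval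
            (fun i => algebraMap K L (Algebra.trace K L (v i * f x))) F = x :=
  stmt8_general u v hbasisu hdual f
end

section
/- Let t, n be positive integers with t ≤ n, and let g_1,…,g_t : 𝔽_{q^n} → 𝔽_q be maps such that the map φ_t : 𝔽_{q^n} → 𝔽_q^t, φ_t(x) = (g_1(x),…,g_t(x)), has every fiber of cardinality exactly q^{n−t}. Then for any basis u_1,…,u_n of 𝔽_{q^n} over 𝔽_q there exist maps f_{t+1},…,f_n : 𝔽_{q^n} → 𝔽_q such that the map x ↦ u_1 g_1(x) + ⋯ + u_t g_t(x) + u_{t+1} f_{t+1}(x) + ⋯ + u_n f_n(x) is a bijection of 𝔽_{q^n}. -/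
/-!
If every fibre of `φ : α → β` has the cardinality of `γ`, then choosing a bijection of each
fibre with `γ` turns `α` into `β × γ` with `φ` as first coordinate. For `φ = φ_t` and
`γ = 𝔽_q^{n-t}` this gives a bijection `𝔽_{q^n} ≃ 𝔽_q^n` whose first `t` coordinates are the
`gᵢ`; reading its coordinates in the basis `u` yields the required permutation.
-/

theorem exists_equiv_prod_fst_eq_of_card_fiber {α β γ : Type*} [Finite γ] [Nonempty γ]
    (φ : α → β) (hφ : ∀ b, Nat.card {a // φ a = b} = Nat.card γ) :
    ∃ e : α ≃ β × γ, ∀ a, (e a).1 = φ a := by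
  have (b : β) : Finite {a // φ a = b} :=
    Nat.finite_of_card_ne_zero ((hφ b).trans_ne Nat.card_pos.ne')
  have e b : {a // φ a = b} ≃ γ := (Finite.card_eq.mp (hφ b)).some
  exact ⟨(Equiv.sigmaFiberEquiv φ).symm.trans
    ((Equiv.sigmaCongrRight e).trans (Equiv.sigmaEquivProd β γ)), fun _ => rfl⟩

theorem exists_equiv_fin_append_of_card_fiber {α K : Type*} [Finite K] [Nonempty K] {t m : ℕ}
    (φ : α → Fin t → K) (hφ : ∀ b, Nat.card {a // φ a = b} = Nat.card K ^ m) :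
    ∃ E : α ≃ (Fin (t + m) → K), ∀ a i, E a (Fin.castAdd m i) = φ a i := by
  obtain ⟨e, he⟩ := exists_equiv_prod_fst_eq_of_card_fiber (γ := Fin m → K) φ
    (by simpa only [Nat.card_fun, Nat.card_eq_fintype_card, Fintype.card_fin] using hφ)
  refine ⟨e.trans (Fin.appendEquiv t m), fun a i => ?_⟩
  simp [Fin.appendEquiv, he]

theorem stmt9_general {K L : Type*} [Field K] [Field L] [Algebra K L]
    [Fintype K] {n t : ℕ} (ht' : t ≤ n)
    (g : Fin t → L → K)
    (hfib : ∀ a : Fin t → K,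
      {x : L | ∀ i, g i x = a i}.ncard = Fintype.card K ^ (n - t))
    (u : Fin n → L)
    (hbasisu : LinearIndependent K u ∧ Submodule.span K (Set.range u) = ⊤) :
    ∃ f : Fin n → L → K,
      (∀ i : Fin t, f (Fin.castLE ht' i) = g i) ∧
        Function.Bijective (fun x : L => ∑ i, u i * algebraMap K L (f i x)) := by
  obtain ⟨m, rfl⟩ := Nat.exists_eq_add_of_le ht'
  obtain ⟨E, hE⟩ := exists_equiv_fin_append_of_card_fiber (m := m) (fun x i => g i x) fun a => by
    convert hfib a using 1
    · simp only [funext_iff]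
      exact Nat.card_coe_set_eq _
    · simp
  let B := Module.Basis.mk hbasisu.1 hbasisu.2.ge
  refine ⟨fun i x => E x i, fun i => funext fun x => hE x i, ?_⟩
  convert B.equivFun.symm.bijective.comp E.bijective using 1
  funext x
  simp [B, Module.Basis.equivFun_symm_apply, Algebra.smul_def, mul_comm]

/-- Let `1 ≤ t ≤ n` and `g₁,…,gₜ : L → K` be maps such that
`x ↦ (g₁(x),…,gₜ(x))` has every fiber of cardinality exactly `q^{n−t}`. Then for any
basis `u₁,…,uₙ` of `L = 𝔽_{q^n}` over `K = 𝔽_q` there are maps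
`f_{t+1},…,fₙ : L → K` (encoded as a single tuple `f : Fin n → L → K` whose first `t`
components are the `gᵢ`) making `x ↦ ∑ᵢ uᵢ fᵢ(x)` a bijection of `L`. -/
theorem stmt9 {K L : Type*} [Field K] [Field L] [Algebra K L]
    [Fintype K] [Fintype L] {n t : ℕ} (hn : 0 < n) (ht : 1 ≤ t) (ht' : t ≤ n)
    (hdim : Module.finrank K L = n)
    (g : Fin t → L → K)
    (hfib : ∀ a : Fin t → K,
      {x : L | ∀ i, g i x = a i}.ncard = Fintype.card K ^ (n - t))
    (u : Fin n → L)
    (hbasisu : LinearIndependent K u ∧ Submodule.span K (Set.range u) = ⊤) :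
    ∃ f : Fin n → L → K,
      (∀ i : Fin t, f (Fin.castLE ht' i) = g i) ∧
        Function.Bijective (fun x : L => ∑ i, u i * algebraMap K L (f i x)) :=
  stmt9_general ht' g hfib u hbasisu
end

section
/- Let t, n be positive integers with t ≤ n, let u_1,…,u_n be a basis of 𝔽_{q^n} over 𝔽_q, and let g_1,…,g_t : 𝔽_{q^n} → 𝔽_q be maps such that the map x ↦ (g_1(x),…,g_t(x)) from 𝔽_{q^n} to 𝔽_q^t has every fiber of cardinality exactly q^{n−t}. Then the number of tuples (f_{t+1},…,f_n) of maps 𝔽_{q^n} → 𝔽_q such that the map x ↦ u_1 g_1(x) + ⋯ + u_t g_t(x) + u_{t+1} f_{t+1}(x) + ⋯ + u_n f_n(x) is a bijection of 𝔽_{q^n} equals (q^{n−t}!)^{q^t}. -/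
/-!
In the coordinates of the basis `u`, the map `x ↦ ∑ uᵢ fᵢ(x)` becomes `x ↦ (g(x), f(x))`, and
a bijection `L → K^n` of this form is exactly a bijection that lies over the map
`g : L → K^t` (followed by projection to the first `t` coordinates). Such bijections are
families of bijections between the fibres of `g` and those of the projection, indexed by
the `q^t` points of `K^t`; all these fibres have `q^{n-t}` elements.
-/

open Function Nat

namespace Equiv

variable {α β γ : Type*}

def equivOverEquivPiFiber (f : α → γ) (g : β → γ) :
    {e : α ≃ β // ∀ a, g (e a) = f a} ≃ ∀ c, {a // f a = c} ≃ {b // g b = c} where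
  toFun e c := e.1.subtypeEquiv fun a => by rw [e.2 a]
  invFun σ := ⟨ofFiberEquiv σ, ofFiberEquiv_map σ⟩
  left_inv e := by ext a; rfl
  right_inv σ := by
    funext c
    ext ⟨a, rfl⟩
    rfl

end Equiv

namespace Nat

theorem card_equiv_of_card_eq {α β : Type*} [Finite α] [Finite β]
    (h : Nat.card α = Nat.card β) : Nat.card (α ≃ β) = (Nat.card α)! := by
  obtain ⟨e⟩ := Finite.card_eq.mp h
  rw [← Nat.card_perm, Nat.card_congr ((Equiv.refl α).equivCongr e)]

theorem card_comp_eq_of_injective {ι κ β : Type*} [Finite κ] {s : ι → κ}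
    (hs : Injective s) (a : ι → β) :
    Nat.card {v : κ → β // v ∘ s = a} = Nat.card β ^ (Nat.card κ - Nat.card ι) := by
  classical
  let r := Equiv.ofInjective s hs
  have hiff : ∀ v : κ → β, v ∘ s = a ↔ v ∘ Subtype.val = a ∘ r.symm := by
    intro v
    constructor
    · rintro rfl
      funext ⟨_, i, rfl⟩
      simp [r, Equiv.ofInjective_symm_apply]
    · intro h
      funext i
      simpa [r] using congrFun h (r i)
  rw [Nat.card_congr ((Equiv.subtypeEquivRight hiff).trans (Equiv.subtypePreimage _ _)),
    Nat.card_fun, ← Nat.card_range_of_injective hs]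
  exact congrArg _ (Set.ncard_compl (Set.range s))

variable {α β γ : Type*} [Fintype γ]

theorem card_bijective_over_eq_prod (f : α → γ) (g : β → γ) :
    Nat.card {F : α → β // Bijective F ∧ ∀ a, g (F a) = f a} =
      ∏ c, Nat.card ({a // f a = c} ≃ {b // g b = c}) := by
  let bijEquiv : {F : α → β // Bijective F ∧ ∀ a, g (F a) = f a} ≃
      {e : α ≃ β // ∀ a, g (e a) = f a} :=
    { toFun F := ⟨Equiv.ofBijective F.1 F.2.1, F.2.2⟩
      invFun e := ⟨e.1, e.1.bijective, e.2⟩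
      left_inv _ := rfl
      right_inv _ := Subtype.ext (Equiv.ext fun _ => rfl) }
  rw [Nat.card_congr (bijEquiv.trans (Equiv.equivOverEquivPiFiber f g)), Nat.card_pi]

theorem card_bijective_over_of_card_fiber [Finite α] [Finite β] {f : α → γ} {g : β → γ}
    {m : ℕ} (hf : ∀ c, Nat.card {a // f a = c} = m) (hg : ∀ c, Nat.card {b // g b = c} = m) :
    Nat.card {F : α → β // Bijective F ∧ ∀ a, g (F a) = f a} = m ! ^ Fintype.card γ := by
  rw [card_bijective_over_eq_prod]
  simp only [card_equiv_of_card_eq ((hf _).trans (hg _).symm), hf, Finset.prod_const,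
    Finset.card_univ]

end Nat

theorem Module.Basis.bijective_sum_smul_iff {ι K M α : Type*} [Fintype ι] [Semiring K]
    [AddCommMonoid M] [Module K M] (b : Module.Basis ι K M) (F : α → ι → K) :
    Bijective (fun x => ∑ i, F x i • b i) ↔ Bijective F := by
  have : (fun x => ∑ i, F x i • b i) = b.equivFun.symm ∘ F := by
    funext x
    simp [Module.Basis.equivFun_symm_apply]
  rw [this]
  exact b.equivFun.symm.toEquiv.comp_bijective F

theorem stmt10_general {K L : Type*} [Field K] [Field L] [Algebra K L]
    [Fintype K] [Fintype L] {n t : ℕ} (ht' : t ≤ n)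
    (u : Fin n → L)
    (hbasisu : LinearIndependent K u ∧ Submodule.span K (Set.range u) = ⊤)
    (g : Fin t → L → K)
    (hfib : ∀ a : Fin t → K,
      {x : L | ∀ i, g i x = a i}.ncard = Fintype.card K ^ (n - t)) :
    {f : Fin n → L → K | (∀ i : Fin t, f (Fin.castLE ht' i) = g i) ∧
        Function.Bijective
          (fun x : L => ∑ i, u i * algebraMap K L (f i x))}.ncard =
      (Nat.factorial (Fintype.card K ^ (n - t))) ^ (Fintype.card K ^ t) := by
  let b := Module.Basis.mk hbasisu.1 hbasisu.2.ge
  let G : L → Fin t → K := fun x i => g i x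
  have hsum : ∀ f : Fin n → L → K,
      (fun x : L => ∑ i, u i * algebraMap K L (f i x)) = fun x => ∑ i, f i x • b i := by
    intro f
    funext x
    simp [b, Algebra.smul_def, mul_comm]
  let coords : {f : Fin n → L → K | (∀ i : Fin t, f (Fin.castLE ht' i) = g i) ∧
        Function.Bijective (fun x : L => ∑ i, u i * algebraMap K L (f i x))} ≃
      {F : L → Fin n → K // Bijective F ∧ ∀ x, F x ∘ Fin.castLE ht' = G x} :=
    (Equiv.piComm _).subtypeEquiv fun f => by
      rw [Set.mem_ofPred_eq, hsum, b.bijective_sum_smul_iff, and_comm]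
      simp only [funext_iff, Equiv.piComm_apply, comp_apply, G]
      exact and_congr_right' forall_comm
  have hG : ∀ a, Nat.card {x // G x = a} = Fintype.card K ^ (n - t) := by
    intro a
    rw [← hfib a]
    exact Nat.card_congr (Equiv.subtypeEquivRight fun x => funext_iff)
  have hres : ∀ a : Fin t → K, Nat.card {v : Fin n → K // v ∘ Fin.castLE ht' = a} =
      Fintype.card K ^ (n - t) := by
    intro a
    simp [Nat.card_comp_eq_of_injective (Fin.castLE_injective ht') a]
  rw [← Nat.card_coe_set_eq, Nat.card_congr coords,
    Nat.card_bijective_over_of_card_fiber hG hres, Fintype.card_fun, Fintype.card_fin]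

/-- Let `1 ≤ t ≤ n`, let `u₁,…,uₙ` be a basis of `L = 𝔽_{q^n}` over
`K = 𝔽_q`, and let `g₁,…,gₜ : L → K` be such that `x ↦ (g₁(x),…,gₜ(x))` has every
fiber of cardinality exactly `q^{n−t}`. Then the number of tuples
`(f_{t+1},…,fₙ)` of maps `L → K` (encoded as tuples `f : Fin n → L → K` whose first
`t` components equal the `gᵢ`) such that `x ↦ ∑ᵢ uᵢ fᵢ(x)` is a bijection of `L`
equals `(q^{n−t}!)^{q^t}`. -/
theorem stmt10 {K L : Type*} [Field K] [Field L] [Algebra K L]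
    [Fintype K] [Fintype L] {n t : ℕ} (hn : 0 < n) (ht : 1 ≤ t) (ht' : t ≤ n)
    (hdim : Module.finrank K L = n)
    (u : Fin n → L)
    (hbasisu : LinearIndependent K u ∧ Submodule.span K (Set.range u) = ⊤)
    (g : Fin t → L → K)
    (hfib : ∀ a : Fin t → K,
      {x : L | ∀ i, g i x = a i}.ncard = Fintype.card K ^ (n - t)) :
    {f : Fin n → L → K | (∀ i : Fin t, f (Fin.castLE ht' i) = g i) ∧
        Function.Bijective
          (fun x : L => ∑ i, u i * algebraMap K L (f i x))}.ncard =
      (Nat.factorial (Fintype.card K ^ (n - t))) ^ (Fintype.card K ^ t) :=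
  stmt10_general ht' u hbasisu g hfib
end

section
/- Let q be a prime power with q ≡ 3 (mod 4) and let m be an odd positive integer. Then the map x ↦ (x + x^q)^m + (x − x^q)^m is a bijection of 𝔽_{q^2} if and only if gcd(m, q−1) = 1. -/
/-!
Write `σ x = x ^ q`, an involutive ring automorphism of `F` with fixed field `𝔽_q`. In
`f x = (x + σ x) ^ m + (x - σ x) ^ m` the first summand is fixed by `σ` and, `m` being odd, the
second is negated by `σ`. As `q` is odd, an element both fixed and negated by `σ` vanishes, so
`f x = f y` splits into `(x + σ x) ^ m = (y + σ y) ^ m` and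
`(x - σ x) ^ m = (y - σ y) ^ m`, and when `gcd(m, q - 1) = 1` the `m`-th power map is injective on
`𝔽_q`, and so also on the `σ`-antifixed elements (their quotients lie in `𝔽_q`).
Conversely, if a prime `r` divides `gcd(m, q - 1)`, an element `z ≠ 1` of `𝔽_q^×` of order `r`
satisfies `f z = (2 z) ^ m = 2 ^ m = f 1`.
-/

open Function

section Involution

variable {F : Type*} [Field F]

def conjPowSum (σ : F →+* F) (m : ℕ) (x : F) : F :=
  (x + σ x) ^ m + (x - σ x) ^ m

lemma eq_of_pow_eq_of_map_eq_neg {σ : F →+* F} {m : ℕ} (hm : m ≠ 0)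
    (hfix : ∀ a b, σ a = a → σ b = b → a ^ m = b ^ m → a = b)
    {v w : F} (hv : σ v = -v) (hw : σ w = -w) (hvw : v ^ m = w ^ m) : v = w := by
  rcases eq_or_ne w 0 with rfl | hw0
  · exact pow_eq_zero_iff hm |>.mp (hvw.trans (zero_pow hm))
  have hquot : σ (v / w) = v / w := by rw [map_div₀, hv, hw, neg_div_neg_eq]
  have hquot_pow : (v / w) ^ m = 1 ^ m := by
    rw [div_pow, hvw, div_self (pow_ne_zero _ hw0), one_pow]
  exact (div_eq_one_iff_eq hw0).mp (hfix _ _ hquot (map_one σ) hquot_pow)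

theorem conjPowSum_injective {σ : F →+* F} (hσ : ∀ x, σ (σ x) = x) (h2 : (2 : F) ≠ 0)
    {m : ℕ} (hm : Odd m) (hfix : ∀ a b, σ a = a → σ b = b → a ^ m = b ^ m → a = b) :
    Injective (conjPowSum σ m) := by
  intro x y hxy
  have hplus : ∀ z, σ (z + σ z) = z + σ z := fun z => by rw [map_add, hσ, add_comm]
  have hminus : ∀ z, σ (z - σ z) = -(z - σ z) := fun z => by rw [map_sub, hσ, neg_sub]
  set d := (x + σ x) ^ m - (y + σ y) ^ m
  have hd : d = (y - σ y) ^ m - (x - σ x) ^ m := by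
    unfold conjPowSum at hxy; linear_combination hxy
  have hd_fix : σ d = d := by simp only [d, map_sub, map_pow, hplus]
  have hd_neg : σ d = -d := by
    rw [hd, map_sub, map_pow, map_pow, hminus, hminus, hm.neg_pow, hm.neg_pow]; ring
  have hd0 : d = 0 := by
    have : (2 : F) * d = 0 := by linear_combination hd_neg - hd_fix
    exact (mul_eq_zero.mp this).resolve_left h2
  have hsum : x + σ x = y + σ y := hfix _ _ (hplus x) (hplus y) (sub_eq_zero.mp hd0)
  have hdiff : x - σ x = y - σ y := eq_of_pow_eq_of_map_eq_neg hm.pos.ne' hfix (hminus x)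
    (hminus y) (sub_eq_zero.mp (hd ▸ hd0)).symm
  have : (2 : F) * x = 2 * y := by linear_combination hsum + hdiff
  exact mul_left_cancel₀ h2 this

theorem conjPowSum_not_injective {σ : F →+* F} {m : ℕ} (hm : m ≠ 0) {z : F} (hz1 : z ≠ 1)
    (hσz : σ z = z) (hzm : z ^ m = 1) : ¬Injective (conjPowSum σ m) := fun hinj =>
  hz1 <| hinj <| by simp [conjPowSum, hσz, zero_pow hm, ← two_mul, mul_pow, hzm]

end Involution

lemma pow_left_injOn_of_pow_eq_self {F : Type*} [Field F] {q m : ℕ} (hq : q ≠ 0) (hm : m ≠ 0)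
    (hgcd : m.Coprime (q - 1)) {a b : F} (ha : a ^ q = a) (hb : b ^ q = b)
    (hab : a ^ m = b ^ m) : a = b := by
  rcases eq_or_ne b 0 with rfl | hb0
  · exact pow_eq_zero_iff hm |>.mp (hab.trans (zero_pow hm))
  have hc : (a / b) ^ q = a / b := by rw [div_pow, ha, hb]
  have ha0 : a ≠ 0 := fun ha0 => pow_ne_zero m hb0 (by rw [← hab, ha0, zero_pow hm])
  have hc0 : a / b ≠ 0 := div_ne_zero ha0 hb0
  have hcm : (a / b) ^ m = 1 := by rw [div_pow, hab, div_self (pow_ne_zero _ hb0)]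
  have hcq : (a / b) ^ (q - 1) = 1 :=
    mul_right_cancel₀ hc0 (by rw [pow_sub_one_mul hq, hc, one_mul])
  exact (div_eq_one_iff_eq hb0).mp ((pow_eq_one_iff_of_coprime hgcd).mp ⟨hcm, hcq⟩)

lemma exists_ne_one_pow_eq_one_of_dvd_card {G : Type*} [Group G] [Fintype G] {d : ℕ}
    (hd : d ≠ 1) (hdG : d ∣ Fintype.card G) : ∃ g : G, g ≠ 1 ∧ g ^ d = 1 := by
  obtain ⟨r, hr, hrd⟩ := Nat.exists_prime_and_dvd hd
  have := Fact.mk hr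
  obtain ⟨g, hg⟩ := exists_prime_orderOf_dvd_card r (hrd.trans hdG)
  refine ⟨g, fun h => hr.one_lt.ne' (by rw [← hg, h, orderOf_one]), ?_⟩
  exact orderOf_dvd_iff_pow_eq_one.mp (hg ▸ hrd)

theorem stmt12_general {F : Type*} [Field F] [Fintype F] (q : ℕ) (hq : IsPrimePow q)
    (hF : Fintype.card F = q ^ 2) (hq3 : q % 4 = 3)
    (m : ℕ) (hodd : Odd m) :
    Function.Bijective (fun x : F => (x + x ^ q) ^ m + (x - x ^ q) ^ m) ↔
      Nat.gcd m (q - 1) = 1 := by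
  classical
  obtain ⟨p, k, hp, -, rfl⟩ := hq
  have := Fact.mk (Nat.prime_iff.mpr hp)
  have : CharP F p := charP_of_card_eq_prime_pow (f := k * 2) (by rw [hF, pow_mul])
  set σ := iterateFrobenius F p k
  have hσ : ∀ x, σ (σ x) = x := fun x => by
    simp only [σ, iterateFrobenius_def, ← pow_mul, ← sq, ← hF, FiniteField.pow_card]
  have h2 : (2 : F) ≠ 0 := Ring.two_ne_zero <| by
    have hcard_odd : (p ^ k) ^ 2 % 2 = 1 := Nat.odd_iff.mp (Nat.odd_iff.mpr (by omega)).pow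
    rw [ne_eq, FiniteField.even_card_iff_char_two, hF]
    omega
  change Bijective (conjPowSum σ m) ↔ _
  rw [← Finite.injective_iff_bijective]
  constructor
  · intro hinj
    by_contra hgcd
    obtain ⟨u, hu1, hud⟩ := exists_ne_one_pow_eq_one_of_dvd_card (G := Fˣ) hgcd
      (by rw [Fintype.card_units, hF]
          exact (Nat.gcd_dvd_right _ _).trans (Nat.sub_one_dvd_pow_sub_one _ _))
    obtain ⟨hum, huq⟩ := pow_gcd_eq_one.mp hud
    refine conjPowSum_not_injective hodd.pos.ne' (z := (u : F)) (Units.val_eq_one.not.mpr hu1) ?_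
      (by rw [← Units.val_pow_eq_pow_val, hum, Units.val_one]) hinj
    rw [iterateFrobenius_def, ← pow_sub_one_mul (by omega), ← Units.val_pow_eq_pow_val, huq,
      Units.val_one, one_mul]
  · intro hgcd
    exact conjPowSum_injective hσ h2 hodd fun a b ha hb =>
      pow_left_injOn_of_pow_eq_self (by omega) hodd.pos.ne' hgcd ha hb

/-- Let `q` be a prime power with `q ≡ 3 (mod 4)`, `F` a finite field
with `q²` elements, and `m` an odd positive integer. Then
`x ↦ (x + x^q)^m + (x − x^q)^m` is a bijection of `F` iff `gcd(m, q−1) = 1`. -/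
theorem stmt12 {F : Type*} [Field F] [Fintype F] (q : ℕ) (hq : IsPrimePow q)
    (hF : Fintype.card F = q ^ 2) (hq3 : q % 4 = 3)
    (m : ℕ) (hm : 0 < m) (hodd : Odd m) :
    Function.Bijective (fun x : F => (x + x ^ q) ^ m + (x - x ^ q) ^ m) ↔
      Nat.gcd m (q - 1) = 1 :=
  stmt12_general q hq hF hq3 m hodd
end

section
/- Let p be an odd prime, q a power of p with q ≡ 3 (mod 4), and r a positive integer such that m = p^r + 2 < q and gcd(p^r + 2, q − 1) = 1. Then the map x ↦ x^{p^r+2} + x^{p^r+2q} + 2x^{1+(p^r+1)q} is a bijection of 𝔽_{q^2}. -/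
/-!
Put `u = x + x^q` and `v = x - x^q`, so that `u^q = u` and `v^q = -v`. Since `x ↦ x^(p^r)` is
additive, twice the polynomial at `x` equals `u^m + v^m` with `m = p^r + 2`; as `m` is odd, its
`q`-th power is `u^m - v^m`. So the value at `x` determines `u^m` and `v^m`. On each eigenspace
`{w | w^q = e w}` of the Frobenius, `m`-th powers are injective, because the ratio of two
elements lies in `𝔽_q^×`, whose order `q - 1` is prime to `m`. Hence `u`, `v` and
`x = (u + v)/2` are determined.
-/

open Function

theorem add_pow_add_sub_pow_expChar_pow_add_two {R : Type*} [CommRing R] {p : ℕ} [ExpChar R p]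
    (a b : R) (r : ℕ) :
    (a + b) ^ (p ^ r + 2) + (a - b) ^ (p ^ r + 2) =
      2 * (a ^ (p ^ r + 2) + a ^ p ^ r * b ^ 2 + 2 * a * b ^ (p ^ r + 1)) := by
  rw [pow_add, pow_add, add_pow_expChar_pow, sub_pow_expChar_pow]
  ring

theorem two_mul_eq_add_pow_add_sub_pow {R : Type*} [CommRing R] (p : ℕ) [ExpChar R p]
    (x : R) (q r : ℕ) :
    2 * (x ^ (p ^ r + 2) + x ^ (p ^ r + 2 * q) + 2 * x ^ (1 + (p ^ r + 1) * q)) =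
      (x + x ^ q) ^ (p ^ r + 2) + (x - x ^ q) ^ (p ^ r + 2) := by
  rw [add_pow_add_sub_pow_expChar_pow_add_two]
  ring

theorem eq_one_of_pow_eq_self_of_pow_eq_one {M : Type*} [MonoidWithZero M] [IsCancelMulZero M]
    {t : M} {q m : ℕ} (ht : t ≠ 0) (htq : t ^ q = t) (htm : t ^ m = 1)
    (hmq : m.Coprime (q - 1)) : t = 1 := by
  refine (pow_eq_one_iff_of_coprime hmq).mp ⟨htm, ?_⟩
  rcases q with _ | q
  · exact pow_zero t
  · rw [pow_succ] at htq
    exact (mul_left_eq_self₀.mp htq).resolve_right ht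

theorem injOn_pow_setOf_pow_eq_mul {F : Type*} [Field F] {q m : ℕ} (hm : m ≠ 0)
    (hmq : m.Coprime (q - 1)) {e : F} (he : e ≠ 0) :
    Set.InjOn (· ^ m) {u : F | u ^ q = e * u} := by
  intro u hu u' hu' h
  simp only at h
  rcases eq_or_ne u' 0 with rfl | hu'0
  · simpa [zero_pow hm, pow_eq_zero_iff hm] using h
  have htm : (u / u') ^ m = 1 := by rw [div_pow, h, div_self (pow_ne_zero m hu'0)]
  have htq : (u / u') ^ q = u / u' := by rw [div_pow, hu, hu', mul_div_mul_left _ _ he]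
  have ht0 : u / u' ≠ 0 := ne_zero_pow hm (htm ▸ one_ne_zero)
  exact (div_eq_one_iff_eq hu'0).mp (eq_one_of_pow_eq_self_of_pow_eq_one ht0 htq htm hmq)

theorem injective_add_pow_add_sub_pow {F : Type*} [Field F] (σ : F →+* F) {q m : ℕ}
    (hσq : ∀ x, σ x = x ^ q) (hσσ : ∀ x, σ (σ x) = x) (h2 : (2 : F) ≠ 0) (hm : Odd m)
    (hmq : m.Coprime (q - 1)) :
    Injective fun x : F => (x + σ x) ^ m + (x - σ x) ^ m := by
  intro x y hxy
  simp only at hxy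
  have hu : ∀ z, σ (z + σ z) = 1 * (z + σ z) := fun z => by
    rw [map_add, hσσ, one_mul, add_comm]
  have hv : ∀ z, σ (z - σ z) = -1 * (z - σ z) := fun z => by
    rw [map_sub, hσσ, neg_one_mul, neg_sub]
  have hxy' : (x + σ x) ^ m - (x - σ x) ^ m = (y + σ y) ^ m - (y - σ y) ^ m := by
    have := congrArg σ hxy
    simp only [map_add, map_pow, hu, hv, one_mul, neg_one_mul, hm.neg_pow] at this
    simpa only [← sub_eq_add_neg] using this
  have hum : (x + σ x) ^ m = (y + σ y) ^ m :=
    mul_left_cancel₀ h2 (by linear_combination hxy + hxy')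
  have hvm : (x - σ x) ^ m = (y - σ y) ^ m :=
    mul_left_cancel₀ h2 (by linear_combination hxy - hxy')
  have eigen {e z : F} (h : σ z = e * z) : z ∈ {u : F | u ^ q = e * u} := (hσq z).symm.trans h
  have hm0 : m ≠ 0 := hm.pos.ne'
  have hu' := injOn_pow_setOf_pow_eq_mul hm0 hmq one_ne_zero (eigen (hu x)) (eigen (hu y)) hum
  have hv' := injOn_pow_setOf_pow_eq_mul hm0 hmq (neg_ne_zero.mpr one_ne_zero)
    (eigen (hv x)) (eigen (hv y)) hvm
  exact mul_left_cancel₀ h2 (by linear_combination hu' + hv')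

theorem stmt16_general {F : Type*} [Field F] [Fintype F] (p q r : ℕ)
    (hp : p.Prime) (hpodd : Odd p) (hq : ∃ k : ℕ, 0 < k ∧ q = p ^ k)
    (hF : Fintype.card F = q ^ 2)
    (hgcd : Nat.gcd (p ^ r + 2) (q - 1) = 1) :
    Function.Bijective (fun x : F =>
      x ^ (p ^ r + 2) + x ^ (p ^ r + 2 * q) + 2 * x ^ (1 + (p ^ r + 1) * q)) := by
  obtain ⟨k, -, rfl⟩ := hq
  have : Fact p.Prime := ⟨hp⟩
  have : CharP F p := charP_of_card_eq_prime_pow (hF.trans (pow_mul p k 2).symm)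
  have h2 : (2 : F) ≠ 0 := Ring.two_ne_zero <| by
    rw [ringChar.eq F p]
    rintro rfl
    exact Nat.not_even_iff_odd.mpr hpodd even_two
  have hσσ : ∀ x : F, iterateFrobenius F p k (iterateFrobenius F p k x) = x := fun x => by
    rw [iterateFrobenius_def, iterateFrobenius_def, ← pow_mul, ← sq, ← hF,
      FiniteField.pow_card]
  have hinj := injective_add_pow_add_sub_pow (iterateFrobenius F p k) (fun _ => rfl) hσσ h2
    (hpodd.pow.add_even even_two) hgcd
  refine Finite.injective_iff_bijective.mp fun x y hxy => hinj ?_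
  simp only [iterateFrobenius_def, ← two_mul_eq_add_pow_add_sub_pow]
  rw [hxy]

/-- Let `p` be an odd prime, `q` a power of `p` with `q ≡ 3 (mod 4)`,
and `r` a positive integer with `p^r + 2 < q` and `gcd(p^r + 2, q − 1) = 1`. Then
`x ↦ x^{p^r+2} + x^{p^r+2q} + 2x^{1+(p^r+1)q}` is a bijection of the field `F` with
`q²` elements. -/
theorem stmt16 {F : Type*} [Field F] [Fintype F] (p q r : ℕ)
    (hp : p.Prime) (hpodd : Odd p) (hq : ∃ k : ℕ, 0 < k ∧ q = p ^ k)
    (hF : Fintype.card F = q ^ 2) (hq3 : q % 4 = 3) (hr : 0 < r)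
    (hlt : p ^ r + 2 < q) (hgcd : Nat.gcd (p ^ r + 2) (q - 1) = 1) :
    Function.Bijective (fun x : F =>
      x ^ (p ^ r + 2) + x ^ (p ^ r + 2 * q) + 2 * x ^ (1 + (p ^ r + 1) * q)) :=
  stmt16_general p q r hp hpodd hq hF hgcd
end

section
/- Let t be an odd positive integer, q = 2^t, r an odd positive integer, and let ω ∈ 𝔽_{q^2} satisfy ω^2 + ω + 1 = 0 (ω exists since x^2 + x + 1 is irreducible over 𝔽_q for t odd). Then the map x ↦ x^{2^r+1} + x^{q(2^r+1)} + ω^2 x^{2^r+q} is a bijection of 𝔽_{q^2}. -/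
/-!
Write `s = 2 ^ r` and `σ z = z ^ q`, an involution of `𝔽_{q²}` with `σ ω = ω²`. In characteristic 2
the map is `ω T(z) ^ (s + 1) + ω² R(z) ^ (s + 1)` with `T(z) = z + σ z` and `R(z) = z + ω σ z`.
Since `σ T = T`, `σ R = ω² R` and `ω ^ (s + 1) = 1`, both `(s + 1)`-th powers are fixed by `σ`, so
they are recovered from the value and its conjugate. On each of the lines `σ z = c z` the power map
`z ↦ z ^ (s + 1)` is injective because `gcd (2 ^ r + 1, q - 1) = 1` for odd `t`; this recovers
`T(z)` and `R(z)`, and finally `z = ω² T(z) + ω R(z)`.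
-/

theorem Nat.coprime_two_pow_add_one_two_pow_sub_one (r : ℕ) {t : ℕ} (ht : Odd t) :
    Nat.Coprime (2 ^ r + 1) (2 ^ t - 1) := by
  set g := Nat.gcd (2 ^ r + 1) (2 ^ t - 1)
  have hsq : 2 ^ r + 1 ∣ 2 ^ (2 * r) - 1 :=
    ⟨2 ^ r - 1, by rw [mul_comm, pow_mul, ← one_pow 2, Nat.sq_sub_sq, one_pow]⟩
  have hgcd : Nat.gcd (2 * r) t = Nat.gcd r t :=
    Nat.Coprime.gcd_mul_left_cancel r (Nat.coprime_two_left.mpr ht)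
  -- `g` divides `2 ^ gcd (2r) t - 1 = 2 ^ gcd r t - 1`, a divisor of `2 ^ r - 1`
  have hg_sub : g ∣ 2 ^ r - 1 := by
    have h : g ∣ Nat.gcd (2 ^ (2 * r) - 1) (2 ^ t - 1) :=
      Nat.dvd_gcd ((Nat.gcd_dvd_left _ _).trans hsq) (Nat.gcd_dvd_right _ _)
    rw [Nat.pow_sub_one_gcd_pow_sub_one, hgcd, ← Nat.pow_sub_one_gcd_pow_sub_one] at h
    exact h.trans (Nat.gcd_dvd_left _ _)
  have hg_two : g ∣ 2 := by
    have h := Nat.dvd_sub (Nat.gcd_dvd_left _ _) hg_sub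
    rwa [show 2 ^ r + 1 - (2 ^ r - 1) = 2 by have := @Nat.one_le_two_pow r; omega] at h
  rcases (Nat.dvd_prime Nat.prime_two).mp hg_two with h | h
  · exact h
  · have h2 : g ∣ 2 ^ t - 1 := Nat.gcd_dvd_right _ _
    rw [h] at h2
    have h2' : 2 ∣ 2 ^ t := dvd_pow_self 2 ht.pos.ne'
    have := @Nat.one_le_two_pow t
    omega

theorem pow_two_pow_eq_sq_of_odd {R : Type*} [CommRing R] {ω : R} (hω : ω ^ 2 + ω + 1 = 0) {n : ℕ}
    (hn : Odd n) : ω ^ 2 ^ n = ω ^ 2 := by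
  have h3 : ω ^ 3 = 1 := by linear_combination (ω - 1) * hω
  obtain ⟨k, rfl⟩ := hn
  rw [pow_eq_pow_mod _ h3, pow_succ, pow_mul, Nat.mul_mod, Nat.pow_mod]
  norm_num

theorem mul_add_pow_add_sq_mul_add_mul_pow {R : Type*} [CommRing R] [CharP R 2] {ω : R}
    (hω : ω ^ 2 + ω + 1 = 0) {r : ℕ} (hr : Odd r) (a b : R) :
    ω * (a + b) ^ (2 ^ r + 1) + ω ^ 2 * (a + ω * b) ^ (2 ^ r + 1) =
      a ^ (2 ^ r + 1) + b ^ (2 ^ r + 1) + ω ^ 2 * (a ^ 2 ^ r * b) := by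
  have h2 : (2 : R) = 0 := CharTwo.two_eq_zero
  simp only [pow_succ _ (2 ^ r), add_pow_char_pow, mul_pow, pow_two_pow_eq_sq_of_odd hω hr]
  linear_combination
      ((a ^ 2 ^ r * a) + ω * (a ^ 2 ^ r * b) + (ω ^ 2 + ω) * (b ^ 2 ^ r * a)
        + (ω ^ 3 + ω ^ 2 - 1) * (b ^ 2 ^ r * b)) * hω
      - ((a ^ 2 ^ r * a) + ω ^ 2 * (a ^ 2 ^ r * b) + (ω ^ 3 + ω ^ 2) * (b ^ 2 ^ r * a)
        + (ω ^ 4 + ω ^ 3 - ω) * (b ^ 2 ^ r * b)) * h2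

theorem eq_one_of_pow_eq_self_of_pow_eq_one_s17 {K : Type*} [Field K] {ρ : K} {q n : ℕ}
    (hn : n ≠ 0) (hcop : n.Coprime (q - 1)) (hq : ρ ^ q = ρ) (hρ : ρ ^ n = 1) : ρ = 1 := by
  obtain _ | q := q
  · simpa using hq.symm
  have hρ0 : ρ ≠ 0 := by rintro rfl; simp [hn] at hρ
  have hq' : ρ ^ q = 1 := mul_left_cancel₀ hρ0 (by rw [← pow_succ', hq, mul_one])
  exact (pow_eq_one_iff_of_coprime hcop).mp ⟨hρ, hq'⟩

section Involution

variable {K : Type*} [Field K] {σ : K →+* K} {ω : K} {n : ℕ}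

def omegaPowerSum (σ : K →+* K) (ω : K) (n : ℕ) (z : K) : K :=
  ω * (z + σ z) ^ n + ω ^ 2 * (z + ω * σ z) ^ n

theorem map_add_mul_map (hσ : ∀ z, σ (σ z) = z) (hσω : σ ω = ω ^ 2) (hω : ω ^ 2 + ω + 1 = 0)
    (z : K) : σ (z + ω * σ z) = ω ^ 2 * (z + ω * σ z) := by
  rw [map_add, map_mul, hσ, hσω]
  linear_combination (-(ω - 1) * σ z) * hω

theorem map_omegaPowerSum (hσ : ∀ z, σ (σ z) = z) (hσω : σ ω = ω ^ 2)
    (hω : ω ^ 2 + ω + 1 = 0) (hωn : ω ^ n = 1) (z : K) :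
    σ (omegaPowerSum σ ω n z) = ω ^ 2 * (z + σ z) ^ n + ω * (z + ω * σ z) ^ n := by
  have hω2n : (ω ^ 2) ^ n = 1 := by rw [← pow_mul, mul_comm, pow_mul, hωn, one_pow]
  simp only [omegaPowerSum, map_add, map_mul, map_pow, map_add_mul_map hσ hσω hω, hσω, hσ]
  rw [mul_pow, hω2n, one_mul, add_comm (σ z)]
  linear_combination (ω * (z + ω * σ z) ^ n * (ω - 1)) * hω

theorem eq_of_pow_eq_of_map_eq_mul (hn : n ≠ 0) (hfix : ∀ ρ, σ ρ = ρ → ρ ^ n = 1 → ρ = 1)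
    {c z w : K} (hc : c ≠ 0) (hz : σ z = c * z) (hw : σ w = c * w) (h : z ^ n = w ^ n) :
    z = w := by
  rcases eq_or_ne w 0 with rfl | hw0
  · simpa [zero_pow hn, pow_eq_zero_iff hn] using h
  refine (div_eq_one_iff_eq hw0).mp (hfix (z / w) ?_ ?_)
  · rw [map_div₀, hz, hw, mul_div_mul_left _ _ hc]
  · rw [div_pow, h, div_self (pow_ne_zero _ hw0)]

theorem omegaPowerSum_injective [CharP K 2] (hσ : ∀ z, σ (σ z) = z) (hσω : σ ω = ω ^ 2)
    (hω : ω ^ 2 + ω + 1 = 0) (hωn : ω ^ n = 1) (hn : n ≠ 0)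
    (hfix : ∀ ρ, σ ρ = ρ → ρ ^ n = 1 → ρ = 1) :
    Function.Injective (omegaPowerSum σ ω n) := by
  have h2 : (2 : K) = 0 := CharTwo.two_eq_zero
  have hω0 : ω ≠ 0 := by rintro rfl; norm_num at hω
  -- `ω` and `ω²` are linearly independent over the fixed field of `σ`, so both `n`-th powers
  -- can be read off from the value and its conjugate
  have hT : ∀ z, (z + σ z) ^ n =
      ω * omegaPowerSum σ ω n z + ω ^ 2 * σ (omegaPowerSum σ ω n z) := by
    intro z
    rw [map_omegaPowerSum hσ hσω hω hωn]
    unfold omegaPowerSum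
    linear_combination (-(ω ^ 2 - ω + 1) * (z + σ z) ^ n) * hω
      + ((z + σ z) ^ n - ω ^ 3 * (z + ω * σ z) ^ n) * h2
  have hR : ∀ z, (z + ω * σ z) ^ n =
      ω ^ 2 * omegaPowerSum σ ω n z + ω * σ (omegaPowerSum σ ω n z) := by
    intro z
    rw [map_omegaPowerSum hσ hσω hω hωn]
    unfold omegaPowerSum
    linear_combination (-(ω ^ 2 - ω + 1) * (z + ω * σ z) ^ n) * hω
      + ((z + ω * σ z) ^ n - ω ^ 3 * (z + σ z) ^ n) * h2
  have hrec : ∀ z, z = ω ^ 2 * (z + σ z) + ω * (z + ω * σ z) := by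
    intro z
    linear_combination (-z) * hω + (z - ω ^ 2 * σ z) * h2
  intro x y hxy
  have hTxy : x + σ x = y + σ y :=
    eq_of_pow_eq_of_map_eq_mul hn hfix one_ne_zero (by simp [hσ, add_comm]) (by simp [hσ, add_comm])
      (by rw [hT, hT, hxy])
  have hRxy : x + ω * σ x = y + ω * σ y :=
    eq_of_pow_eq_of_map_eq_mul hn hfix (pow_ne_zero 2 hω0) (map_add_mul_map hσ hσω hω x)
      (map_add_mul_map hσ hσω hω y) (by rw [hR, hR, hxy])
  rw [hrec x, hrec y, hTxy, hRxy]

end Involution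

theorem stmt17_general {F : Type*} [Field F] [Fintype F] (t q r : ℕ)
    (htodd : Odd t) (hq : q = 2 ^ t)
    (hrodd : Odd r)
    (hF : Fintype.card F = q ^ 2)
    (ω : F) (hω : ω ^ 2 + ω + 1 = 0) :
    Function.Bijective (fun x : F =>
      x ^ (2 ^ r + 1) + x ^ (q * (2 ^ r + 1)) + ω ^ 2 * x ^ (2 ^ r + q)) := by
  subst hq
  have : CharP F 2 := charP_of_card_eq_prime_pow (hF.trans (pow_mul 2 t 2).symm)
  have hσ : ∀ z : F, iterateFrobenius F 2 t (iterateFrobenius F 2 t z) = z := fun z => by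
    rw [iterateFrobenius_def, iterateFrobenius_def, ← pow_mul, ← sq, ← hF, FiniteField.pow_card]
  have hωn : ω ^ (2 ^ r + 1) = 1 := by
    rw [pow_succ, pow_two_pow_eq_sq_of_odd hω hrodd]
    linear_combination (ω - 1) * hω
  have hfix : ∀ ρ : F, iterateFrobenius F 2 t ρ = ρ → ρ ^ (2 ^ r + 1) = 1 → ρ = 1 :=
    fun ρ hρ hρn => eq_one_of_pow_eq_self_of_pow_eq_one_s17 (by positivity)
      (Nat.coprime_two_pow_add_one_two_pow_sub_one r htodd) hρ hρn
  have hinj :=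
    omegaPowerSum_injective hσ (pow_two_pow_eq_sq_of_odd hω htodd) hω hωn (by positivity) hfix
  convert hinj.bijective_of_finite using 1
  funext z
  rw [omegaPowerSum, iterateFrobenius_def, mul_add_pow_add_sq_mul_add_mul_pow hω hrodd, ← pow_mul,
    ← pow_add, mul_comm]

/-- Let `t` be an odd positive integer, `q = 2^t`, `r` an odd positive
integer, `F` the field with `q²` elements, and `ω ∈ F` with `ω² + ω + 1 = 0`. Then
`x ↦ x^{2^r+1} + x^{q(2^r+1)} + ω² x^{2^r+q}` is a bijection of `F`. -/
theorem stmt17 {F : Type*} [Field F] [Fintype F] (t q r : ℕ)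
    (ht : 0 < t) (htodd : Odd t) (hq : q = 2 ^ t)
    (hr : 0 < r) (hrodd : Odd r)
    (hF : Fintype.card F = q ^ 2)
    (ω : F) (hω : ω ^ 2 + ω + 1 = 0) :
    Function.Bijective (fun x : F =>
      x ^ (2 ^ r + 1) + x ^ (q * (2 ^ r + 1)) + ω ^ 2 * x ^ (2 ^ r + q)) :=
  stmt17_general t q r htodd hq hrodd hF ω hω
end

section
/- Let n ≥ 2, let γ ∈ 𝔽_{q^n} be nonzero, let u_1,…,u_{n−1} ∈ 𝔽_{q^n} be such that u_1,…,u_{n−1}, γ is a basis of 𝔽_{q^n} over 𝔽_q, and let H : 𝔽_{q^n} → 𝔽_{q^n} be a map such that x ↦ Tr(H(x)) has every fiber of cardinality exactly q^{n−1} (i.e. Tr(H(x)) is a q^{n−1}-to-1 map). Then the number of tuples (f_1,…,f_{n−1}) of maps 𝔽_{q^n} → 𝔽_q such that the map x ↦ u_1 f_1(x) + ⋯ + u_{n−1} f_{n−1}(x) + γ Tr(H(x)) is a bijection of 𝔽_{q^n} equals (q^{n−1}!)^q. -/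
/-!
Expanding in the basis `u₁, …, u_{n-1}, γ`, the map `x ↦ ∑ uᵢ fᵢ(x) + γ T(x)` with
`T = Tr ∘ H` is a bijection exactly when `x ↦ (T(x), f₁(x), …, f_{n-1}(x)) ∈ 𝔽_q × 𝔽_q^{n-1}`
is one, i.e. when `(f₁, …, f_{n-1})` restricts to a bijection from each fibre of `T` onto
`𝔽_q^{n-1}`. The fibres are chosen independently, and each of the `q` fibres has `q^{n-1}`
elements, so there are `(q^{n-1}!)^q` choices.
-/

open Function

namespace Equiv

variable {α β γ : Type*} (T : α → β)

theorem apply_mk_fiber_eq (e : ∀ b, {x // T x = b} ≃ γ) {x : α} {b : β} (hx : T x = b) :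
    e (T x) ⟨x, rfl⟩ = e b ⟨x, hx⟩ := by
  subst hx; rfl

noncomputable def bijectivePairEquivFiberEquiv :
    {g : α → γ // Bijective fun x => (T x, g x)} ≃ ∀ b, ({x // T x = b} ≃ γ) where
  toFun g b := Equiv.ofBijective (fun x => g.1 x.1) <| by
    constructor
    · rintro ⟨x, rfl⟩ ⟨y, hy⟩ hxy
      exact Subtype.ext (g.2.1 (Prod.ext hy.symm hxy))
    · intro c
      obtain ⟨x, hx⟩ := g.2.2 (b, c)
      exact ⟨⟨x, congrArg Prod.fst hx⟩, congrArg Prod.snd hx⟩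
  invFun e := ⟨fun x => e (T x) ⟨x, rfl⟩, by
    constructor
    · intro x y hxy
      have hT : T x = T y := congrArg Prod.fst hxy
      have hg : e (T x) ⟨x, rfl⟩ = e (T y) ⟨y, rfl⟩ := congrArg Prod.snd hxy
      rw [apply_mk_fiber_eq T e hT] at hg
      exact congrArg Subtype.val ((e (T y)).injective hg)
    · rintro ⟨b, c⟩
      let z := (e b).symm c
      refine ⟨z, Prod.ext z.2 ?_⟩
      exact (apply_mk_fiber_eq T e z.2).trans ((e b).apply_symm_apply c)⟩
  left_inv _ := rfl
  right_inv e := by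
    funext b
    ext ⟨x, hx⟩
    exact apply_mk_fiber_eq T e hx

end Equiv

theorem Nat.card_equiv_of_card_eq_s18 {α β : Type*} [Finite α] [Finite β]
    (h : Nat.card α = Nat.card β) :
    Nat.card (α ≃ β) = (Nat.card β).factorial := by
  obtain ⟨e⟩ := Finite.card_eq.mp h
  rw [Nat.card_congr (e.equivCongr (Equiv.refl β)), Nat.card_perm]

theorem Nat.card_bijective_pair {α β γ : Type*} [Finite α] [Fintype β] [Finite γ] (T : α → β)
    (hT : ∀ b, Nat.card {x // T x = b} = Nat.card γ) :
    Nat.card {g : α → γ // Bijective fun x => (T x, g x)} =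
      (Nat.card γ).factorial ^ Fintype.card β := by
  rw [Nat.card_congr (Equiv.bijectivePairEquivFiberEquiv T), Nat.card_pi]
  simp [Nat.card_equiv_of_card_eq_s18 (hT _)]

theorem bijective_sum_mul_algebraMap_iff {K L α : Type*} [CommRing K] [Ring L] [Algebra K L]
    {m : ℕ} {u : Fin m → L} {γ : L}
    (hli : LinearIndependent K (Fin.snoc u γ : Fin (m + 1) → L))
    (hsp : Submodule.span K (Set.range (Fin.snoc u γ : Fin (m + 1) → L)) = ⊤)
    (T : α → K) (g : α → Fin m → K) :
    Bijective (fun x => ∑ i, u i * algebraMap K L (g x i) + γ * algebraMap K L (T x)) ↔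
      Bijective (fun x => (T x, g x)) := by
  let b := Module.Basis.mk hli hsp.ge
  let e := (Fin.snocEquiv fun _ => K).trans b.equivFun.symm.toEquiv
  have he : (fun x => ∑ i, u i * algebraMap K L (g x i) + γ * algebraMap K L (T x)) =
      e ∘ fun x => (T x, g x) := by
    funext x
    simp [e, b, Module.Basis.equivFun_symm_apply, Fin.sum_univ_castSucc, Algebra.commutes,
      Algebra.smul_def]
  rw [he, Bijective.of_comp_iff' e.bijective]

theorem stmt18_general {K L : Type*} [Field K] [Field L] [Algebra K L]
    [Fintype K] [Fintype L] {m : ℕ}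
    (γ : L) (u : Fin m → L)
    (hbasis : LinearIndependent K (Fin.snoc u γ : Fin (m + 1) → L) ∧
      Submodule.span K (Set.range (Fin.snoc u γ : Fin (m + 1) → L)) = ⊤)
    (H : L → L)
    (hfib : ∀ a : K,
      {x : L | Algebra.trace K L (H x) = a}.ncard = Fintype.card K ^ m) :
    {f : Fin m → L → K |
        Function.Bijective (fun x : L =>
          (∑ i, u i * algebraMap K L (f i x)) +
            γ * algebraMap K L (Algebra.trace K L (H x)))}.ncard =
      (Nat.factorial (Fintype.card K ^ m)) ^ (Fintype.card K) := by
  set T : L → K := fun x => Algebra.trace K L (H x)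
  have hcard : Nat.card (Fin m → K) = Fintype.card K ^ m := by simp
  have hT (a : K) : Nat.card {x // T x = a} = Nat.card (Fin m → K) :=
    hcard ▸ (Nat.card_coe_set_eq _).trans (hfib a)
  rw [← Nat.card_coe_set_eq, ← hcard, ← Nat.card_bijective_pair T hT]
  exact Nat.card_congr <| (Equiv.piComm _).subtypeEquiv fun f =>
    bijective_sum_mul_algebraMap_iff hbasis.1 hbasis.2 T _

/-- Write `n = m + 1` with `m ≥ 1` (so `n ≥ 2`). Let `γ ∈ L = 𝔽_{q^n}`
be nonzero, `u₁,…,u_{n−1} ∈ L` be such that `u₁,…,u_{n−1}, γ` is a basis of `L` over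
`K = 𝔽_q`, and `H : L → L` be such that `x ↦ Tr(H(x))` has every fiber of cardinality
exactly `q^{n−1}`. Then the number of tuples `(f₁,…,f_{n−1})` of maps `L → K` making
`x ↦ ∑ uᵢ fᵢ(x) + γ Tr(H(x))` a bijection of `L` equals `(q^{n−1}!)^q`. -/
theorem stmt18 {K L : Type*} [Field K] [Field L] [Algebra K L]
    [Fintype K] [Fintype L] {m : ℕ} (hm : 1 ≤ m)
    (hdim : Module.finrank K L = m + 1)
    (γ : L) (hγ : γ ≠ 0) (u : Fin m → L)
    (hbasis : LinearIndependent K (Fin.snoc u γ : Fin (m + 1) → L) ∧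
      Submodule.span K (Set.range (Fin.snoc u γ : Fin (m + 1) → L)) = ⊤)
    (H : L → L)
    (hfib : ∀ a : K,
      {x : L | Algebra.trace K L (H x) = a}.ncard = Fintype.card K ^ m) :
    {f : Fin m → L → K |
        Function.Bijective (fun x : L =>
          (∑ i, u i * algebraMap K L (f i x)) +
            γ * algebraMap K L (Algebra.trace K L (H x)))}.ncard =
      (Nat.factorial (Fintype.card K ^ m)) ^ (Fintype.card K) :=
  stmt18_general γ u hbasis H hfib
end

section
/- Let n ≥ 2, let γ ∈ 𝔽_{q^n} be nonzero, and let H : 𝔽_{q^n} → 𝔽_{q^n} be a map such that x ↦ Tr(H(x)) is not a constant map. Then the number of bijections F : 𝔽_{q^n} → 𝔽_{q^n} such that the map G : 𝔽_{q^n} → 𝔽_{q^n} defined by G(x) = F(x) − γ Tr(H(x)) is neither a bijection of 𝔽_{q^n} nor an 𝔽_q-linear map (linearized polynomial) is at least (q^{n−1}!)^q − (q^n − q)(q^n − q^2)⋯(q^n − q^{n−1}). -/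
/-!
Fix a linear form `ψ : L → 𝔽_q` with `ψ γ = 1`, so that `ψ (G x) = ψ (F x) - Tr (H x)`. Each fibre
of `ψ` has `q^{n-1}` elements, and the zero set of `ψ ∘ G` has at least that many both when `G` is
bijective (it is then `G⁻¹ (ker ψ)`) and when `G` is additive (it is then the kernel of the form
`ψ ∘ G`). It therefore suffices to find a permutation `π` such that `ψ ∘ π` agrees with `Tr ∘ H` at
fewer than `q^{n-1}` points: then all `(q^{n-1}!)^q` bijections `F` with `ψ ∘ F = ψ ∘ π` work.

Composing with a translation, it is enough that some fibre of `Tr ∘ H - ψ ∘ ρ` is that small, for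
some permutation `ρ`. Take `ρ` to be the transposition of two points separated by both `ψ` and
`Tr ∘ H`: it strictly shrinks one fibre of `Tr ∘ H - ψ`. Either the shrunk fibre is small enough,
or that fibre of `Tr ∘ H - ψ` is larger than `q^{n-1}`, and since the `q` fibres of `Tr ∘ H - ψ`
average `q^{n-1}`, another one is smaller.
-/

open Function Finset

lemma exists_ne_and_ne {α β γ : Type*} {f : α → β} {g : α → γ}
    (hf : ∃ a b, f a ≠ f b) (hg : ∃ a b, g a ≠ g b) : ∃ a b, f a ≠ f b ∧ g a ≠ g b := by
  by_contra! h
  obtain ⟨a, b, hab⟩ := hf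
  obtain ⟨c, d, hcd⟩ := hg
  have hg_const : ∀ e, g e = g a := fun e => by
    by_cases hea : f e = f a
    · rw [h e b (hea ▸ hab), ← h a b hab]
    · exact h e a hea
  exact hcd ((hg_const c).trans (hg_const d).symm)

lemma card_sub_comp_swap_lt {α A : Type*} [Fintype α] [DecidableEq α] [AddGroup A]
    [DecidableEq A] {σ t : α → A} {a b : α} (hσ : σ a ≠ σ b) (ht : t a ≠ t b) :
    #{x | t x - σ (Equiv.swap a b x) = t a - σ a} < #{x | t x - σ x = t a - σ a} := by
  apply card_lt_card
  rw [ssubset_iff_of_subset]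
  · exact ⟨a, by simp, by simpa [eq_comm] using hσ⟩
  intro x hx
  simp only [mem_filter, mem_univ, true_and] at hx ⊢
  have hxa : x ≠ a := by
    rintro rfl
    simp only [Equiv.swap_apply_left, sub_right_inj] at hx
    exact hσ hx.symm
  have hxb : x ≠ b := by
    rintro rfl
    simp only [Equiv.swap_apply_right, sub_left_inj] at hx
    exact ht hx.symm
  rwa [Equiv.swap_apply_of_ne_of_ne hxa hxb] at hx

section FibreCount

variable {V A : Type*} [AddCommGroup V] [AddCommGroup A] [Fintype V] [DecidableEq A]

lemma card_fiber_le_card_fiber_zero (U : V →+ A) (c : A) :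
    #{x | U x = c} ≤ #{x | U x = 0} := by
  by_cases hc : c ∈ Set.range U
  · exact (AddMonoidHom.card_fiber_eq_of_mem_range U hc ⟨0, map_zero U⟩).le
  · simp only [Set.mem_range, not_exists] at hc
    simp [hc]

lemma card_fiber_eq_card_fiber_zero {ψ : V →+ A} (hψ : Surjective ψ) (c : A) :
    #{x | ψ x = c} = #{x | ψ x = 0} :=
  AddMonoidHom.card_fiber_eq_of_mem_range ψ (hψ c) ⟨0, map_zero ψ⟩

lemma not_bijective_of_card_fiber_zero_lt {ψ : V →+ A} {G : V → V}
    (h : #{x | ψ (G x) = 0} < #{x | ψ x = 0}) : ¬ Bijective G := fun hG =>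
  h.ne (card_equiv (Equiv.ofBijective G hG) fun _ => by simp)

variable [Fintype A]

lemma card_le_card_mul_card_fiber_zero (U : V →+ A) :
    Fintype.card V ≤ Fintype.card A * #{x | U x = 0} := by
  rw [← card_univ, card_eq_sum_card_fiberwise (f := U) fun _ _ => mem_univ _, ← smul_eq_mul,
    ← card_univ, ← sum_const]
  exact sum_le_sum fun c _ => card_fiber_le_card_fiber_zero U c

variable {ψ : V →+ A} (hψ : Surjective ψ)
include hψ

lemma card_eq_card_mul_card_fiber_zero :
    Fintype.card V = Fintype.card A * #{x | ψ x = 0} := by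
  rw [← card_univ, card_eq_sum_card_fiberwise (f := ψ) fun _ _ => mem_univ _,
    sum_congr rfl fun c _ => card_fiber_eq_card_fiber_zero hψ c, sum_const, card_univ, smul_eq_mul]

lemma not_map_add_of_card_fiber_zero_lt {G : V → V} (h : #{x | ψ (G x) = 0} < #{x | ψ x = 0}) :
    ¬ ∀ x y, G (x + y) = G x + G y := fun hG => by
  have hle := card_le_card_mul_card_fiber_zero (ψ.comp (AddMonoidHom.mk' G hG))
  rw [card_eq_card_mul_card_fiber_zero hψ] at hle
  exact h.not_ge (Nat.le_of_mul_le_mul_left hle Fintype.card_pos)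

lemma exists_card_fiber_lt_of_lt {f : V → A} {c : A} (h : #{x | ψ x = 0} < #{x | f x = c}) :
    ∃ k, #{x | f x = k} < #{x | ψ x = 0} := by
  by_contra! hge
  have hlt : ∑ _k : A, #{x | ψ x = 0} < ∑ k, #{x | f x = k} :=
    sum_lt_sum (fun k _ => hge k) ⟨c, mem_univ _, h⟩
  rw [← card_eq_sum_card_fiberwise (f := f) fun _ _ => mem_univ _, card_univ, sum_const,
    card_univ, smul_eq_mul, ← card_eq_card_mul_card_fiber_zero hψ] at hlt
  exact hlt.false

lemma exists_perm_card_sub_lt {t : V → A} (ht : ¬ ∃ c, ∀ x, t x = c) :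
    ∃ (π : Equiv.Perm V) (k : A), #{x | t x - ψ (π x) = k} < #{x | ψ x = 0} := by
  classical
  replace ht : ∃ a b, t a ≠ t b := by
    push Not at ht
    obtain ⟨a, ha⟩ := ht (t 0)
    exact ⟨a, 0, ha⟩
  have hψ_ne : ∃ a b, ψ a ≠ ψ b := by
    obtain ⟨a, b, hab⟩ := ht
    obtain ⟨y, hy⟩ := hψ (t a - t b)
    exact ⟨y, 0, by simpa [hy, sub_eq_zero] using hab⟩
  obtain ⟨a, b, hta, hψa⟩ := exists_ne_and_ne ht hψ_ne
  by_cases h : #{x | t x - ψ (Equiv.swap a b x) = t a - ψ a} < #{x | ψ x = 0}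
  · exact ⟨Equiv.swap a b, _, h⟩
  · have hswap := card_sub_comp_swap_lt (σ := ψ) hψa hta
    obtain ⟨k, hk⟩ := exists_card_fiber_lt_of_lt hψ (f := fun x => t x - ψ x)
      (c := t a - ψ a) (by omega)
    exact ⟨1, k, hk⟩

lemma exists_perm_card_lt {t : V → A} (ht : ¬ ∃ c, ∀ x, t x = c) :
    ∃ π : Equiv.Perm V, #{x | ψ (π x) = t x} < #{x | ψ x = 0} := by
  obtain ⟨π, k, hk⟩ := exists_perm_card_sub_lt hψ ht
  obtain ⟨y, rfl⟩ := hψ k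
  refine ⟨π.trans (Equiv.addRight y), ?_⟩
  convert hk using 3 with x
  simp [eq_sub_iff_add_eq, eq_comm, add_comm]

lemma card_perm_comp_eq_comp [DecidableEq V] (π : Equiv.Perm V) :
    Fintype.card {F : Equiv.Perm V // ψ ∘ F = ψ ∘ π} =
      (#{x | ψ x = 0}).factorial ^ Fintype.card A := by
  rw [Fintype.card_congr (Equiv.subtypeEquiv (q := fun g : Equiv.Perm V => ψ ∘ g = ψ)
      (Equiv.mulRight π⁻¹) fun F => ?_),
    DomMulAct.stabilizer_card]
  · simp_rw [Fintype.card_subtype, card_fiber_eq_card_fiber_zero hψ]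
    rw [prod_const, card_univ]
  · rw [Equiv.coe_mulRight, Equiv.Perm.coe_mul, ← comp_assoc, Equiv.Perm.inv_def,
      Equiv.comp_symm_eq]

end FibreCount

lemma card_fiber_zero_eq_pow_finrank_sub_one {K V : Type*} [Field K] [Fintype K] [DecidableEq K]
    [AddCommGroup V] [Module K V] [Fintype V] {ψ : V →+ K} (hψ : Surjective ψ) :
    #{x | ψ x = 0} = Fintype.card K ^ (Module.finrank K V - 1) := by
  have hcard := card_eq_card_mul_card_fiber_zero hψ
  rw [Module.card_eq_pow_finrank (K := K)] at hcard
  rcases hr : Module.finrank K V with _ | r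
  · rw [hr, pow_zero] at hcard
    exact absurd (Nat.eq_one_of_mul_eq_one_right hcard.symm) Fintype.one_lt_card.ne'
  · rw [hr, pow_succ'] at hcard
    exact (Nat.eq_of_mul_eq_mul_left Fintype.card_pos hcard).symm

theorem stmt19_general {K L : Type*} [Field K] [Field L] [Algebra K L]
    [Fintype K] [Fintype L] {n : ℕ}
    (hdim : Module.finrank K L = n)
    (γ : L) (hγ : γ ≠ 0) (H : L → L)
    (hnc : ¬ ∃ c : K, ∀ x : L, Algebra.trace K L (H x) = c) :
    (Nat.factorial (Fintype.card K ^ (n - 1))) ^ (Fintype.card K) -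
        ∏ i ∈ Finset.range (n - 1), (Fintype.card K ^ n - Fintype.card K ^ (i + 1)) ≤
      {F : L → L | Function.Bijective F ∧
        ¬ Function.Bijective (fun x : L =>
            F x - γ * algebraMap K L (Algebra.trace K L (H x))) ∧
        ¬ IsLinearMap K (fun x : L =>
            F x - γ * algebraMap K L (Algebra.trace K L (H x)))}.ncard := by
  classical
  obtain ⟨φ, hφγ⟩ := Module.Projective.exists_dual_eq_one K hγ
  set ψ : L →+ K := φ.toAddMonoidHom
  have hψ : Surjective ψ := fun k => ⟨k • γ, by simp [ψ, hφγ]⟩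
  obtain ⟨π, hπ⟩ := exists_perm_card_lt hψ hnc
  refine (Nat.sub_le _ _).trans ?_
  rw [← hdim, ← card_fiber_zero_eq_pow_finrank_sub_one hψ, ← card_perm_comp_eq_comp hψ π,
    ← Nat.card_coe_set_eq, ← Nat.card_eq_fintype_card]
  refine Nat.card_le_card_of_injective (fun F => ⟨F.1, F.1.bijective, ?_⟩)
    fun F F' h => Subtype.ext (Equiv.coe_inj.mp (congrArg Subtype.val h))
  have hψG : ∀ x, ψ (F.1 x - γ * algebraMap K L (Algebra.trace K L (H x))) =
      ψ (π x) - Algebra.trace K L (H x) := fun x => by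
    show φ _ = φ _ - _
    rw [map_sub, mul_comm, ← Algebra.smul_def, map_smul, hφγ, smul_eq_mul, mul_one]
    exact congrArg (· - _) (congrFun F.2 x)
  have hzero : #{x | ψ (F.1 x - γ * algebraMap K L (Algebra.trace K L (H x))) = 0} <
      #{x | ψ x = 0} := by
    convert hπ using 3 with x
    rw [hψG, sub_eq_zero]
  exact ⟨not_bijective_of_card_fiber_zero_lt (ψ := ψ) hzero,
    fun h => not_map_add_of_card_fiber_zero_lt hψ hzero h.map_add⟩

/-- Let `n ≥ 2`, `L = 𝔽_{q^n}` over `K = 𝔽_q`, `γ ∈ L` nonzero, and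
`H : L → L` with `x ↦ Tr(H(x))` not constant. Then the number of bijections
`F : L → L` such that `G(x) = F(x) − γ Tr(H(x))` is neither a bijection of `L` nor
an `K`-linear map is at least `(q^{n−1}!)^q − (q^n − q)(q^n − q²)⋯(q^n − q^{n−1})`. -/
theorem stmt19 {K L : Type*} [Field K] [Field L] [Algebra K L]
    [Fintype K] [Fintype L] {n : ℕ} (hn : 2 ≤ n)
    (hdim : Module.finrank K L = n)
    (γ : L) (hγ : γ ≠ 0) (H : L → L)
    (hnc : ¬ ∃ c : K, ∀ x : L, Algebra.trace K L (H x) = c) :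
    (Nat.factorial (Fintype.card K ^ (n - 1))) ^ (Fintype.card K) -
        ∏ i ∈ Finset.range (n - 1), (Fintype.card K ^ n - Fintype.card K ^ (i + 1)) ≤
      {F : L → L | Function.Bijective F ∧
        ¬ Function.Bijective (fun x : L =>
            F x - γ * algebraMap K L (Algebra.trace K L (H x))) ∧
        ¬ IsLinearMap K (fun x : L =>
            F x - γ * algebraMap K L (Algebra.trace K L (H x)))}.ncard :=
  stmt19_general hdim γ hγ H hnc
end
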